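/- arXiv:1409.3524 — 2 statements merged into one kernel-verified Lean document; each statement's English description precedes it below -/
import Mathlib

section
/- Let k be a squarefree positive integer. There is a bijection between the set of triples (m₁,m₂,m₃) of positive integers such that gcd(m₁m₂m₃, k) = k, and the set of sextuples ((k₁,n₁),(k₂,n₂),(k₃,n₃)) of positive integers such that each kᵢ divides k, k divides k₁k₂k₃, and gcd(nᵢ, k/kᵢ) = 1 for i = 1,2,3; the bijection is given by kᵢ = gcd(mᵢ, k) and mᵢ = kᵢ nᵢ. -/
/-- The set of triples `(m₁,m₂,m₃)` of positive integers with `gcd(m₁m₂m₃,k) = k`. -/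
def tripleSet (k : ℕ) : Set (ℕ × ℕ × ℕ) :=
  {m | 0 < m.1 ∧ 0 < m.2.1 ∧ 0 < m.2.2 ∧ Nat.gcd (m.1 * m.2.1 * m.2.2) k = k}

/-- The set of sextuples `((k₁,n₁),(k₂,n₂),(k₃,n₃))` with `kᵢ | k`, `k | k₁k₂k₃`,
`nᵢ > 0` and `gcd(nᵢ, k/kᵢ) = 1`. -/
def sextupleSet (k : ℕ) : Set ((ℕ × ℕ) × (ℕ × ℕ) × (ℕ × ℕ)) :=
  {t | (t.1.1 ∣ k ∧ t.2.1.1 ∣ k ∧ t.2.2.1 ∣ k) ∧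
       k ∣ t.1.1 * t.2.1.1 * t.2.2.1 ∧
       (0 < t.1.2 ∧ 0 < t.2.1.2 ∧ 0 < t.2.2.2) ∧
       Nat.gcd t.1.2 (k / t.1.1) = 1 ∧ Nat.gcd t.2.1.2 (k / t.2.1.1) = 1 ∧
       Nat.gcd t.2.2.2 (k / t.2.2.1) = 1}

/-- The map `mᵢ ↦ (kᵢ, nᵢ) = (gcd(mᵢ,k), mᵢ/gcd(mᵢ,k))`. -/
def tripleToSextuple (k : ℕ) (m : ℕ × ℕ × ℕ) : (ℕ × ℕ) × (ℕ × ℕ) × (ℕ × ℕ) :=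
  ((Nat.gcd m.1 k, m.1 / Nat.gcd m.1 k),
   (Nat.gcd m.2.1 k, m.2.1 / Nat.gcd m.2.1 k),
   (Nat.gcd m.2.2 k, m.2.2 / Nat.gcd m.2.2 k))

/-!
Each coordinate is handled separately: `m ↦ (gcd(m,k), m / gcd(m,k))` is a bijection from the
positive integers onto the pairs `(d, n)` with `d ∣ k`, `n > 0` and `gcd(n, k/d) = 1`, with
inverse `(d, n) ↦ d n`; the point is that `gcd(d n, k) = d · gcd(n, k/d)`. The coupling condition
`gcd(m₁m₂m₃, k) = k`, i.e. `k ∣ m₁m₂m₃`, becomes `k ∣ k₁k₂k₃` because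
`gcd(k, ab) ∣ gcd(k, a) · gcd(k, b)`.
-/

namespace Nat

theorem gcd_mul_eq_of_coprime_div {d n k : ℕ} (hd : d ∣ k) (hn : n.Coprime (k / d)) :
    (d * n).gcd k = d := by
  conv_lhs => rw [← Nat.mul_div_cancel' hd]
  rw [Nat.gcd_mul_left, hn.gcd_eq_one, mul_one]

theorem dvd_mul_mul_iff_dvd_gcd_mul_gcd_mul_gcd {k a b c : ℕ} :
    k ∣ a * b * c ↔ k ∣ a.gcd k * b.gcd k * c.gcd k := by
  simp only [Nat.gcd_comm _ k]
  refine ⟨fun h => ?_, fun h => h.trans ?_⟩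
  · calc k ∣ k.gcd (a * b) * k.gcd c := Nat.dvd_gcd_mul_gcd_iff_dvd_mul.mpr h
      _ ∣ k.gcd a * k.gcd b * k.gcd c :=
        Nat.mul_dvd_mul_right (Nat.gcd_mul_right_dvd_mul_gcd k a b) _
  · exact Nat.mul_dvd_mul (Nat.mul_dvd_mul (k.gcd_dvd_right a) (k.gcd_dvd_right b))
      (k.gcd_dvd_right c)

end Nat

def gcdSplit (k m : ℕ) : ℕ × ℕ := (m.gcd k, m / m.gcd k)

def coprimeSplits (k : ℕ) : Set (ℕ × ℕ) :=
  {p | p.1 ∣ k ∧ 0 < p.2 ∧ p.2.Coprime (k / p.1)}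

theorem bijOn_gcdSplit {k : ℕ} (hk : k ≠ 0) :
    Set.BijOn (gcdSplit k) {m | 0 < m} (coprimeSplits k) := by
  have pos_of_dvd {d : ℕ} (hd : d ∣ k) : 0 < d := Nat.pos_of_dvd_of_pos hd (Nat.pos_of_ne_zero hk)
  refine Set.InvOn.bijOn (f' := fun p => p.1 * p.2) ⟨?_, ?_⟩ ?_ ?_
  · intro m _
    exact Nat.mul_div_cancel' (m.gcd_dvd_left k)
  · rintro ⟨d, n⟩ ⟨hd, -, hn⟩
    simp only [gcdSplit, Nat.gcd_mul_eq_of_coprime_div hd hn,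
      Nat.mul_div_cancel_left n (pos_of_dvd hd)]
  · intro m (hm : 0 < m)
    have hg : 0 < m.gcd k := Nat.gcd_pos_of_pos_left k hm
    exact ⟨m.gcd_dvd_right k, Nat.div_pos (Nat.le_of_dvd hm (m.gcd_dvd_left k)) hg,
      Nat.coprime_div_gcd_div_gcd hg⟩
  · rintro ⟨d, n⟩ ⟨hd, hn, -⟩
    exact Nat.mul_pos (pos_of_dvd hd) hn

theorem tripleSet_eq (k : ℕ) :
    tripleSet k = {m | 0 < m} ×ˢ {m | 0 < m} ×ˢ {m | 0 < m} ∩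
      tripleToSextuple k ⁻¹' {t | k ∣ t.1.1 * t.2.1.1 * t.2.2.1} := by
  ext ⟨a, b, c⟩
  simp [tripleSet, tripleToSextuple, Nat.gcd_eq_right_iff_dvd,
    Nat.dvd_mul_mul_iff_dvd_gcd_mul_gcd_mul_gcd, and_assoc]

theorem sextupleSet_eq (k : ℕ) :
    sextupleSet k = coprimeSplits k ×ˢ coprimeSplits k ×ˢ coprimeSplits k ∩
      {t | k ∣ t.1.1 * t.2.1.1 * t.2.2.1} := by
  ext ⟨⟨k₁, n₁⟩, ⟨k₂, n₂⟩, ⟨k₃, n₃⟩⟩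
  simp only [sextupleSet, coprimeSplits, Nat.coprime_iff_gcd_eq_one, Set.mem_inter_iff,
    Set.mem_prod, Set.mem_ofPred_eq]
  tauto

/-- For squarefree `k`, the map `(m₁,m₂,m₃) ↦ ((k₁,n₁),(k₂,n₂),(k₃,n₃))` with
`kᵢ = gcd(mᵢ,k)`, `mᵢ = kᵢnᵢ` is a bijection between the two sets. -/
theorem tripleToSextuple_bijOn (k : ℕ) (hk : Squarefree k) :
    Set.BijOn (tripleToSextuple k) (tripleSet k) (sextupleSet k) := by
  have h := bijOn_gcdSplit hk.ne_zero
  rw [tripleSet_eq, sextupleSet_eq]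
  exact (h.prodMap (h.prodMap h)).inter_mapsTo (Set.mapsTo_preimage _ _) Set.inter_subset_right
end

section
/- Let k be squarefree, k₁ a divisor of k, and suppose Re(w) > 1. Then ∑_{n ≥ 1, gcd(n, k/k₁) = 1, gcd(n, qh/k) = 1} R_k(k₁ n) ψ(n) / n^w = μ(k) μ(k₁) φ(k₁) · L_{(q/k₁)h}(w, ψ), where L_{M}(w,ψ) denotes the Dirichlet L-function of the character ψ with the Euler factors at primes dividing M removed. -/
open Complex Finset ArithmeticFunction
open scoped ArithmeticFunction.Moebius

/-- The Ramanujan sum `R_k(n)`. -/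
noncomputable def ramanujanSum (k : ℕ) (n : ℤ) : ℂ :=
  ∑ a ∈ (Finset.range k).filter (fun a => Nat.gcd a k = 1),
    Complex.exp (2 * Real.pi * Complex.I * a * n / k)

/-! Möbius inversion of the condition `gcd(a, k) = 1` and orthogonality of additive characters
give `R_k(m) = ∑_{d ∣ (k, m)} μ(k/d) d`. For `k = k₁k₂` squarefree and `n` coprime to `k₂` we have
`(k, k₁n) = k₁`, so `R_k(k₁n) = μ(k₂) ∑_{d ∣ k₁} μ(k₁/d) d = μ(k)μ(k₁)φ(k₁)` does not depend on `n`.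
Since `q/k₁ · h = k₂ · (qh/k)`, the two coprimality conditions of the series merge into coprimality
with `(q/k₁)h`, and the identity holds term by term. -/

theorem sum_range_exp_eq_ite {n : ℕ} (hn : n ≠ 0) (m : ℤ) :
    ∑ a ∈ range n, exp (2 * Real.pi * I * a * m / n) = if (n : ℤ) ∣ m then (n : ℂ) else 0 := by
  set ζ := exp (2 * Real.pi * I * m / n)
  have hpow (a : ℕ) : exp (2 * Real.pi * I * a * m / n) = ζ ^ a := by
    rw [← exp_nat_mul]; ring_nf
  have hζ : ζ = 1 ↔ (n : ℤ) ∣ m := by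
    rw [exp_eq_one_iff]
    constructor
    · rintro ⟨c, hc⟩
      field_simp at hc
      exact ⟨c, by exact_mod_cast hc⟩
    · rintro ⟨c, rfl⟩
      exact ⟨c, by push_cast; field_simp⟩
  simp_rw [hpow]
  split_ifs with hdvd
  · simp [hζ.mpr hdvd]
  · have hζn : ζ ^ n = 1 := by
      rw [← exp_nat_mul, exp_eq_one_iff]
      exact ⟨m, by field_simp⟩
    rw [geom_sum_eq (mt hζ.mp hdvd), hζn, sub_self, zero_div]

theorem sum_divisors_moebius_eq_ite {R : Type*} [Ring R] (n : ℕ) :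
    ∑ d ∈ n.divisors, (μ d : R) = if n = 1 then 1 else 0 := by
  have h := congr($(coe_moebius_mul_coe_zeta (R := R)) n)
  rwa [coe_mul_zeta_apply, one_apply] at h

theorem sum_divisors_moebius_div_mul_eq_totient {R : Type*} [Ring R] (n : ℕ) :
    ∑ d ∈ n.divisors, (μ (n / d) : R) * d = n.totient := by
  rcases n.eq_zero_or_pos with rfl | hn
  · simp
  have hsum (m : ℕ) : ∑ i ∈ m.divisors, (i.totient : R) = m := by
    exact_mod_cast congr(Nat.cast (R := R) $(Nat.sum_totient m))
  rw [← sum_eq_iff_sum_mul_moebius_eq.mp (fun m _ => hsum m) n hn,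
    Nat.sum_divisorsAntidiagonal' (f := fun x y => (μ x : R) * y)]

theorem sum_range_filter_dvd {M : Type*} [AddCommMonoid M] {k d : ℕ} (hd : d ∣ k) (hd0 : d ≠ 0)
    (f : ℕ → M) :
    ∑ a ∈ range k with d ∣ a, f a = ∑ b ∈ range (k / d), f (d * b) := by
  refine sum_nbij' (· / d) (d * ·) ?_ ?_ ?_ ?_ ?_
  · intro a ha
    simp only [mem_filter, mem_range] at ha ⊢
    exact Nat.div_lt_div_of_lt_of_dvd hd ha.1
  · intro b hb
    simp only [mem_filter, mem_range] at hb ⊢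
    refine ⟨?_, dvd_mul_right d b⟩
    calc d * b < d * (k / d) := Nat.mul_lt_mul_of_pos_left hb (Nat.pos_of_ne_zero hd0)
      _ = k := Nat.mul_div_cancel' hd
  · intro a ha
    exact Nat.mul_div_cancel' (mem_filter.mp ha).2
  · intro b _
    exact Nat.mul_div_cancel_left b (Nat.pos_of_ne_zero hd0)
  · intro a ha
    rw [Nat.mul_div_cancel' (mem_filter.mp ha).2]

theorem filter_divisors_dvd_eq_divisors_gcd {k : ℕ} (hk : k ≠ 0) (a : ℕ) :
    {e ∈ k.divisors | e ∣ a} = (Nat.gcd a k).divisors := by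
  ext e
  simp [Nat.dvd_gcd_iff, hk, Nat.gcd_ne_zero_right hk, and_comm]

theorem ramanujanSum_eq_sum_divisors {k : ℕ} (hk : k ≠ 0) (m : ℤ) :
    ramanujanSum k m = ∑ d ∈ k.divisors with ((d : ℕ) : ℤ) ∣ m, (μ (k / d) : ℂ) * (d : ℂ) := by
  set χ : ℕ → ℂ := fun a => exp (2 * Real.pi * I * a * m / k)
  calc ramanujanSum k m
      = ∑ a ∈ range k, ∑ e ∈ k.divisors, if e ∣ a then (μ e : ℂ) * χ a else 0 := by
        rw [ramanujanSum, sum_filter]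
        refine sum_congr rfl fun a _ => ?_
        rw [← sum_filter, filter_divisors_dvd_eq_divisors_gcd hk, ← sum_mul,
          sum_divisors_moebius_eq_ite, ite_mul, one_mul, zero_mul]
    _ = ∑ e ∈ k.divisors,
          (μ e : ℂ) * ∑ b ∈ range (k / e), exp (2 * Real.pi * I * b * m / ↑(k / e)) := by
        rw [sum_comm]
        refine sum_congr rfl fun e he => ?_
        have hek := Nat.dvd_of_mem_divisors he
        have he0 : (e : ℂ) ≠ 0 := Nat.cast_ne_zero.mpr (ne_zero_of_dvd_ne_zero hk hek)
        rw [← sum_filter, ← mul_sum, sum_range_filter_dvd hek (Nat.cast_ne_zero.mp he0)]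
        refine congrArg _ (sum_congr rfl fun b _ => congrArg exp ?_)
        rw [Nat.cast_div hek he0]
        push_cast
        field_simp
    _ = ∑ e ∈ k.divisors,
          (μ e : ℂ) * if ((k / e : ℕ) : ℤ) ∣ m then ((k / e : ℕ) : ℂ) else 0 := by
        refine sum_congr rfl fun e he => ?_
        have hek := Nat.dvd_of_mem_divisors he
        rw [sum_range_exp_eq_ite
          (Nat.div_ne_zero_iff_of_dvd hek |>.mpr ⟨hk, ne_zero_of_dvd_ne_zero hk hek⟩)]
    _ = ∑ d ∈ k.divisors, (μ (k / d) : ℂ) * if (d : ℤ) ∣ m then (d : ℂ) else 0 := by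
        rw [← Nat.sum_div_divisors]
        refine sum_congr rfl fun d hd => ?_
        rw [Nat.div_div_self (Nat.dvd_of_mem_divisors hd) hk]
    _ = _ := by simp only [mul_ite, mul_zero, sum_ite, sum_const_zero, add_zero]

theorem divisors_filter_dvd_mul_eq_divisors {k₁ k₂ n : ℕ} (hk : k₁ * k₂ ≠ 0)
    (hn : n.Coprime k₂) : {d ∈ (k₁ * k₂).divisors | d ∣ k₁ * n} = k₁.divisors := by
  have hgcd : Nat.gcd (k₁ * k₂) (k₁ * n) = k₁ := by
    rw [Nat.gcd_mul_left, hn.symm, mul_one]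
  ext d
  simp only [mem_filter, Nat.mem_divisors, hk, left_ne_zero_of_mul hk, ne_eq, not_false_eq_true,
    and_true]
  rw [← Nat.dvd_gcd_iff, hgcd]

theorem sum_divisors_moebius_mul_div_mul_eq {R : Type*} [CommRing R] {k₁ k₂ : ℕ}
    (h : k₁.Coprime k₂) :
    ∑ d ∈ k₁.divisors, (μ (k₁ * k₂ / d) : R) * d = μ k₂ * k₁.totient := by
  rw [← sum_divisors_moebius_div_mul_eq_totient, mul_sum]
  refine sum_congr rfl fun d hd => ?_
  have hdk₁ := Nat.dvd_of_mem_divisors hd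
  rw [← Nat.div_mul_right_comm hdk₁, isMultiplicative_moebius.map_mul_of_coprime
    (h.coprime_dvd_left (Nat.div_dvd_of_dvd hdk₁))]
  push_cast
  ring

theorem moebius_mul_moebius_of_squarefree_mul {k₁ k₂ : ℕ} (hk : Squarefree (k₁ * k₂)) :
    μ (k₁ * k₂) * μ k₁ = μ k₂ := by
  obtain ⟨hcop, hk₁, -⟩ := Nat.squarefree_mul_iff.mp hk
  rw [isMultiplicative_moebius.map_mul_of_coprime hcop, mul_right_comm, ← sq,
    moebius_sq_eq_one_of_squarefree hk₁, one_mul]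

theorem ramanujanSum_mul_of_coprime {k₁ k₂ n : ℕ} (hk : Squarefree (k₁ * k₂))
    (hn : n.Coprime k₂) :
    ramanujanSum (k₁ * k₂) (k₁ * n) = μ (k₁ * k₂) * μ k₁ * k₁.totient := by
  have hk₁₂ : Nat.Coprime k₁ k₂ := (Nat.squarefree_mul_iff.mp hk).1
  have hfilter : {d ∈ (k₁ * k₂).divisors | ((d : ℕ) : ℤ) ∣ k₁ * n} = k₁.divisors := by
    simp only [← Nat.cast_mul, Int.natCast_dvd_natCast]
    exact divisors_filter_dvd_mul_eq_divisors hk.ne_zero hn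
  rw [ramanujanSum_eq_sum_divisors hk.ne_zero, hfilter, sum_divisors_moebius_mul_div_mul_eq hk₁₂,
    ← moebius_mul_moebius_of_squarefree_mul hk]
  push_cast
  ring

theorem ramanujanSum_twisted_series_general (q h k k₁ : ℕ) (hk : Squarefree k)
    (hhk : h * k ∣ q) (hk₁ : k₁ ∣ k) (ψ : DirichletCharacter ℂ q) (w : ℂ) :
    (∑' n : ℕ+, if Nat.gcd (n : ℕ) (k / k₁) = 1 ∧ Nat.gcd (n : ℕ) (q * h / k) = 1 then
        ramanujanSum k (k₁ * (n : ℕ)) * ψ ((n : ℕ) : ZMod q) / (n : ℂ) ^ w else 0) =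
      (μ k : ℂ) * (μ k₁ : ℂ) * (Nat.totient k₁ : ℂ) *
        ∑' n : ℕ+, if Nat.gcd (n : ℕ) (q / k₁ * h) = 1 then
          ψ ((n : ℕ) : ZMod q) / (n : ℂ) ^ w else 0 := by
  obtain ⟨c, rfl⟩ := (dvd_mul_left k h).trans hhk
  obtain ⟨k₂, rfl⟩ := hk₁
  have hk₁ : 0 < k₁ := (left_ne_zero_of_mul hk.ne_zero).bot_lt
  have hk₂ : k₁ * k₂ / k₁ = k₂ := Nat.mul_div_cancel_left k₂ hk₁
  have hch : k₁ * k₂ * c * h / (k₁ * k₂) = c * h := by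
    rw [mul_assoc, Nat.mul_div_cancel_left _ hk.ne_zero.bot_lt]
  have hk₂ch : k₁ * k₂ * c / k₁ * h = k₂ * (c * h) := by
    rw [mul_assoc k₁, Nat.mul_div_cancel_left _ hk₁, mul_assoc]
  rw [← tsum_mul_left]
  refine tsum_congr fun n => ?_
  rw [hk₂, hch, hk₂ch]
  by_cases hn : Nat.Coprime n (k₂ * (c * h))
  · obtain ⟨hnk₂, hnch⟩ := Nat.coprime_mul_iff_right.mp hn
    rw [if_pos ⟨hnk₂, hnch⟩, if_pos hn, ramanujanSum_mul_of_coprime hk hnk₂]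
    ring
  · rw [if_neg (mt Nat.coprime_mul_iff_right.mpr hn), if_neg hn, mul_zero]

/-- For `k` squarefree, `k₁ | k`, `hk | q` (`q` squarefree) and `Re(w) > 1`,
`∑_{n, (n,k/k₁)=1, (n,qh/k)=1} R_k(k₁n) ψ(n) n^{-w} = μ(k)μ(k₁)φ(k₁) L_{(q/k₁)h}(w,ψ)`,
where the `L`-function with removed Euler factors is its Dirichlet series restricted to
`n` coprime to `(q/k₁)h` (valid in the region of absolute convergence). -/
theorem ramanujanSum_twisted_series (q h k k₁ : ℕ) (hq : Squarefree q) (hk : Squarefree k)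
    (hhk : h * k ∣ q) (hk₁ : k₁ ∣ k) (ψ : DirichletCharacter ℂ q) (w : ℂ) (hw : 1 < w.re) :
    (∑' n : ℕ+, if Nat.gcd (n : ℕ) (k / k₁) = 1 ∧ Nat.gcd (n : ℕ) (q * h / k) = 1 then
        ramanujanSum k (k₁ * (n : ℕ)) * ψ ((n : ℕ) : ZMod q) / (n : ℂ) ^ w else 0) =
      (μ k : ℂ) * (μ k₁ : ℂ) * (Nat.totient k₁ : ℂ) *
        ∑' n : ℕ+, if Nat.gcd (n : ℕ) (q / k₁ * h) = 1 then
          ψ ((n : ℕ) : ZMod q) / (n : ℂ) ^ w else 0 :=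
  ramanujanSum_twisted_series_general q h k k₁ hk hhk hk₁ ψ w
end
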